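/- Let d_1 ≤ d_2 ≤ ⋯ ≤ d_n be nonnegative job sizes with d_k = 1 for some 1 ≤ k ≤ n−1 and c(A*) > 0. Let the instance Î be obtained from I = (d_1,…,d_n) by replacing every size d_i < 1 by 0 (all such indices satisfy i < k), leaving all other sizes unchanged. Then the efficacy ratio of the k-th Pareto schedule does not decrease: c_Î(A^k)·c_I(A*) ≥ c_I(A^k)·c_Î(A*), where c_I and c_Î denote the expected social cost of A^k and the optimal social cost computed on the respective instances (with the same split index k). -/
import Mathlib


open Finset

private lemma gaussR (m : ℕ) : ∑ i ∈ Finset.range m, (i : ℝ) = (m : ℝ) * ((m : ℝ) - 1) / 2 := by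
  induction m with
  | zero => simp
  | succ p ih => rw [Finset.sum_range_succ, ih]; push_cast; ring

private lemma doubleSumR (f : ℕ → ℝ) (k : ℕ) :
    ∑ i ∈ Finset.range k, ∑ ℓ ∈ Finset.range (i + 1), f ℓ
      = ∑ ℓ ∈ Finset.range k, ((k : ℝ) - (ℓ : ℝ)) * f ℓ := by
  induction k with
  | zero => simp
  | succ p ih =>
    have rhs : ∑ ℓ ∈ Finset.range (p+1), ((↑(p+1) : ℝ) - (ℓ : ℝ)) * f ℓ
        = ∑ ℓ ∈ Finset.range p, (((p : ℝ)) - (ℓ : ℝ)) * f ℓ + ∑ ℓ ∈ Finset.range (p+1), f ℓ := by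
      rw [Finset.sum_range_succ]
      have h : ∀ ℓ ∈ Finset.range p, ((↑(p+1) : ℝ) - (ℓ : ℝ)) * f ℓ
          = ((p : ℝ) - (ℓ : ℝ)) * f ℓ + f ℓ := by
        intro ℓ _; push_cast; ring
      rw [Finset.sum_congr rfl h, Finset.sum_add_distrib, Finset.sum_range_succ f]
      push_cast; ring
    rw [Finset.sum_range_succ, ih, rhs]

private def ext0 {n : ℕ} (d : Fin n → ℝ) : ℕ → ℝ := fun m => if h : m < n then d ⟨m, h⟩ else 0

private lemma ext0_val {n : ℕ} (d : Fin n → ℝ) (i : Fin n) : ext0 d (i : ℕ) = d i := by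
  simp [ext0, i.isLt]

private lemma filter_lt_sum {n : ℕ} (d : Fin n → ℝ) {m : ℕ} (hm : m ≤ n) :
    ∑ ℓ ∈ Finset.univ.filter (fun ℓ : Fin n => (ℓ : ℕ) < m), d ℓ
      = ∑ ℓ ∈ Finset.range m, ext0 d ℓ := by
  rw [Finset.sum_filter]
  calc ∑ ℓ : Fin n, (if (ℓ : ℕ) < m then d ℓ else 0)
      = ∑ j ∈ Finset.range n, (if j < m then ext0 d j else 0) := by
        rw [← Fin.sum_univ_eq_sum_range (fun j => if j < m then ext0 d j else 0)]
        exact Finset.sum_congr rfl fun ℓ _ => by rw [ext0_val]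
    _ = ∑ ℓ ∈ Finset.range m, ext0 d ℓ := by
        rw [← Finset.sum_filter]
        congr 1
        ext j
        simp only [Finset.mem_filter, Finset.mem_range]
        omega

private lemma total_sum {n : ℕ} (d : Fin n → ℝ) :
    ∑ ℓ : Fin n, d ℓ = ∑ ℓ ∈ Finset.range n, ext0 d ℓ := by
  rw [← Fin.sum_univ_eq_sum_range (ext0 d)]
  exact Finset.sum_congr rfl fun ℓ _ => (ext0_val d ℓ).symm


/-- Expected social cost of the `k`-th Pareto schedule `A^k` (0-indexed). -/
noncomputable def paretoCost {n : ℕ} (d : Fin n → ℝ) (k : ℕ) : ℝ :=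
  ∑ i : Fin n,
    if (i : ℕ) < k then ∑ ℓ ∈ Finset.univ.filter (fun ℓ : Fin n => ℓ ≤ i), d ℓ
    else (∑ ℓ ∈ Finset.univ.filter (fun ℓ : Fin n => (ℓ : ℕ) < k), d ℓ) +
      (((∑ ℓ : Fin n, d ℓ) - ∑ ℓ ∈ Finset.univ.filter (fun ℓ : Fin n => (ℓ : ℕ) < k), d ℓ)
        + d i) / 2

/-- Optimal (Smith's rule) social cost `∑ i (n - i + 1) d_i`, written 0-indexed. -/
noncomputable def smithCost {n : ℕ} (d : Fin n → ℝ) : ℝ :=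
  ∑ i : Fin n, ((n : ℝ) - ((i : ℕ) : ℝ)) * d i


private lemma paretoCost_eq {n k : ℕ} (hk : k ≤ n) (d : Fin n → ℝ) :
    paretoCost d k = ∑ j : Fin n,
      (if (j : ℕ) < k then ((n : ℝ) - ((j : ℕ) : ℝ)) else (((n : ℝ) - (k : ℝ)) + 1) / 2) * d j := by
  set F : ℝ := ∑ ℓ ∈ Finset.range k, ext0 d ℓ with hF
  set D : ℝ := ∑ ℓ ∈ Finset.range n, ext0 d ℓ with hD
  have hDF : ∑ ℓ ∈ Finset.Ico k n, ext0 d ℓ = D - F := by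
    have h := Finset.sum_Ico_consecutive (ext0 d) (Nat.zero_le k) hk
    simp only [Nat.Ico_zero_eq_range] at h
    rw [hF, hD]; linarith
  -- rewrite LHS
  have lhs_eq : paretoCost d k
      = ∑ i ∈ Finset.range n, (if i < k then ∑ ℓ ∈ Finset.range (i+1), ext0 d ℓ
          else F + ((D - F) + ext0 d i) / 2) := by
    rw [paretoCost, ← Fin.sum_univ_eq_sum_range
      (fun i => if i < k then ∑ ℓ ∈ Finset.range (i+1), ext0 d ℓ else F + ((D - F) + ext0 d i) / 2)]
    refine Finset.sum_congr rfl fun i _ => ?_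
    by_cases hi : (i : ℕ) < k
    · rw [if_pos hi, if_pos hi]
      have : Finset.univ.filter (fun ℓ : Fin n => ℓ ≤ i)
          = Finset.univ.filter (fun ℓ : Fin n => (ℓ : ℕ) < (i : ℕ) + 1) := by
        ext ℓ
        simp only [Finset.mem_filter, Finset.mem_univ, true_and, Fin.le_def, Nat.lt_succ_iff]
      rw [this, filter_lt_sum d (by omega : (i : ℕ) + 1 ≤ n)]
    · rw [if_neg hi, if_neg hi, filter_lt_sum d hk, total_sum d, ext0_val]
  rw [lhs_eq]
  -- rewrite RHS
  have rhs_eq : (∑ j : Fin n,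
      (if (j : ℕ) < k then ((n : ℝ) - ((j : ℕ) : ℝ)) else (((n : ℝ) - (k : ℝ)) + 1) / 2) * d j)
      = ∑ j ∈ Finset.range n,
        (if j < k then ((n : ℝ) - (j : ℝ)) else (((n : ℝ) - (k : ℝ)) + 1) / 2) * ext0 d j := by
    rw [← Fin.sum_univ_eq_sum_range
      (fun j => (if j < k then ((n : ℝ) - (j : ℝ)) else (((n : ℝ) - (k : ℝ)) + 1) / 2) * ext0 d j)]
    exact Finset.sum_congr rfl fun j _ => by rw [ext0_val]
  rw [rhs_eq]
  -- split both sides over range k / Ico k n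
  have split : ∀ h : ℕ → ℝ, ∑ i ∈ Finset.range n, h i
      = ∑ i ∈ Finset.range k, h i + ∑ i ∈ Finset.Ico k n, h i := by
    intro h
    have h2 := Finset.sum_Ico_consecutive h (Nat.zero_le k) hk
    simp only [Nat.Ico_zero_eq_range] at h2
    linarith
  rw [split, split]
  have L1 : ∑ i ∈ Finset.range k, (if i < k then ∑ ℓ ∈ Finset.range (i+1), ext0 d ℓ
      else F + ((D - F) + ext0 d i) / 2) = ∑ ℓ ∈ Finset.range k, ((k : ℝ) - (ℓ : ℝ)) * ext0 d ℓ := by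
    rw [← doubleSumR]
    refine Finset.sum_congr rfl fun i hi => ?_
    rw [if_pos (Finset.mem_range.mp hi)]
  have L2 : ∑ i ∈ Finset.Ico k n, (if i < k then ∑ ℓ ∈ Finset.range (i+1), ext0 d ℓ
      else F + ((D - F) + ext0 d i) / 2)
      = ((n : ℝ) - (k : ℝ)) * (F + (D - F) / 2) + (D - F) / 2 := by
    have : ∀ i ∈ Finset.Ico k n, (if i < k then ∑ ℓ ∈ Finset.range (i+1), ext0 d ℓ
        else F + ((D - F) + ext0 d i) / 2) = (F + (D - F) / 2) + ext0 d i / 2 := by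
      intro i hi
      rw [if_neg (by simp [Finset.mem_Ico] at hi; omega)]
      ring
    rw [Finset.sum_congr rfl this, Finset.sum_add_distrib, Finset.sum_const, Nat.card_Ico,
      nsmul_eq_mul, Nat.cast_sub hk, ← Finset.sum_div, hDF]
  have R1 : ∑ j ∈ Finset.range k,
      (if j < k then ((n : ℝ) - (j : ℝ)) else (((n : ℝ) - (k : ℝ)) + 1) / 2) * ext0 d j
      = ∑ ℓ ∈ Finset.range k, ((k : ℝ) - (ℓ : ℝ)) * ext0 d ℓ + ((n : ℝ) - (k : ℝ)) * F := by
    rw [hF, Finset.mul_sum, ← Finset.sum_add_distrib]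
    refine Finset.sum_congr rfl fun j hj => ?_
    rw [if_pos (Finset.mem_range.mp hj)]
    ring
  have R2 : ∑ j ∈ Finset.Ico k n,
      (if j < k then ((n : ℝ) - (j : ℝ)) else (((n : ℝ) - (k : ℝ)) + 1) / 2) * ext0 d j
      = (((n : ℝ) - (k : ℝ)) + 1) / 2 * (D - F) := by
    rw [← hDF, Finset.mul_sum]
    refine Finset.sum_congr rfl fun j hj => ?_
    rw [if_neg (by simp [Finset.mem_Ico] at hj; omega)]
  rw [L1, L2, R1, R2]
  ring

private lemma smithCost_nonneg {n : ℕ} {d : Fin n → ℝ} (hnn : ∀ i, 0 ≤ d i) :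
    0 ≤ smithCost d := by
  refine Finset.sum_nonneg fun i _ => ?_
  have hi : ((i : ℕ) : ℝ) < (n : ℝ) := by exact_mod_cast i.isLt
  have := hnn i
  nlinarith

private lemma smith_le_pareto {n k : ℕ} (hk1 : 1 ≤ k) (hkn : k < n) (g : Fin n → ℝ)
    (hg : ∀ i, 0 ≤ g i) (hmono : Monotone g) : smithCost g ≤ paretoCost g k := by
  rw [paretoCost_eq hkn.le, smithCost, ← sub_nonneg, ← Finset.sum_sub_distrib]
  set s : Finset (Fin n) := Finset.univ.filter (fun j : Fin n => ¬ (j : ℕ) < k) with hs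
  have key : ∑ j : Fin n,
      ((if (j : ℕ) < k then ((n : ℝ) - ((j : ℕ) : ℝ)) else (((n : ℝ) - (k : ℝ)) + 1) / 2) * g j
        - ((n : ℝ) - ((j : ℕ) : ℝ)) * g j)
      = ∑ j ∈ s, (((j : ℕ) : ℝ) - ((n : ℝ) + (k : ℝ) - 1) / 2) * g j := by
    rw [hs, Finset.sum_filter]
    refine Finset.sum_congr rfl fun j _ => ?_
    by_cases hj : (j : ℕ) < k
    · simp [hj]
    · rw [if_neg hj, if_pos hj]
      ring
  rw [key]
  -- Chebyshev
  have hmv : MonovaryOn (fun j : Fin n => ((j : ℕ) : ℝ)) g ↑s := by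
    intro i _ j _ hgij
    have hij : (i : ℕ) ≤ (j : ℕ) := by
      by_contra hc
      exact absurd (hmono (le_of_not_ge (fun h => hc h))) (not_le.mpr hgij)
    show ((i : ℕ) : ℝ) ≤ ((j : ℕ) : ℝ)
    exact_mod_cast hij
  have cheb := hmv.sum_mul_sum_le_card_mul_sum
  have hcard : (s.card : ℝ) = (n : ℝ) - (k : ℝ) := by
    have : s.card = n - k := by
      rw [hs, Finset.card_filter]
      rw [Fin.sum_univ_eq_sum_range (fun j => if ¬ j < k then 1 else 0)]
      have : (Finset.range n).filter (fun j => ¬ j < k) = Finset.Ico k n := by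
        ext j; simp [Finset.mem_Ico]; omega
      rw [← Finset.sum_filter, this, Finset.sum_const, Nat.card_Ico, smul_eq_mul, mul_one]
    rw [this, Nat.cast_sub hkn.le]
  have hsumf : ∑ j ∈ s, ((j : ℕ) : ℝ) = ((n : ℝ) - (k : ℝ)) * ((n : ℝ) + (k : ℝ) - 1) / 2 := by
    have e1 : ∑ j ∈ s, ((j : ℕ) : ℝ) = ∑ j ∈ Finset.Ico k n, (j : ℝ) := by
      rw [hs, Finset.sum_filter]
      rw [Fin.sum_univ_eq_sum_range (fun j => if ¬ j < k then (j : ℝ) else 0)]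
      rw [← Finset.sum_filter]
      congr 1
      ext j; simp [Finset.mem_Ico]; omega
    have e2 : ∑ j ∈ Finset.range k, (j : ℝ) + ∑ j ∈ Finset.Ico k n, (j : ℝ)
        = ∑ j ∈ Finset.range n, (j : ℝ) := by
      have h2 := Finset.sum_Ico_consecutive (fun j : ℕ => (j : ℝ)) (Nat.zero_le k) hkn.le
      simp only [Nat.Ico_zero_eq_range] at h2
      linarith
    rw [e1]
    have := gaussR k
    have := gaussR n
    have hk' : (1 : ℝ) ≤ (k : ℝ) := by exact_mod_cast hk1
    nlinarith [e2, gaussR k, gaussR n]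
  rw [hcard, hsumf] at cheb
  have hnk : (0 : ℝ) < (n : ℝ) - (k : ℝ) := by
    have : (k : ℝ) < (n : ℝ) := by exact_mod_cast hkn
    linarith
  have hSg : 0 ≤ ∑ j ∈ s, g j := Finset.sum_nonneg fun j _ => hg j
  have expand : ∑ j ∈ s, (((j : ℕ) : ℝ) - ((n : ℝ) + (k : ℝ) - 1) / 2) * g j
      = ∑ j ∈ s, ((j : ℕ) : ℝ) * g j - ((n : ℝ) + (k : ℝ) - 1) / 2 * ∑ j ∈ s, g j := by
    rw [Finset.mul_sum, ← Finset.sum_sub_distrib]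
    exact Finset.sum_congr rfl fun j _ => by ring
  rw [expand]
  nlinarith [cheb, hnk, hSg]


/-- Let `d` be sorted nonnegative sizes with the `k`-th smallest size
equal to `1` (the largest job of the first section of `A^k`, i.e. index `k-1`
0-indexed) and positive optimal cost.  Replacing every size `< 1` by `0` (instance
`Î`) does not decrease the efficacy ratio of the `k`-th Pareto schedule:
`c_Î(A^k)·c_I(A*) ≥ c_I(A^k)·c_Î(A*)`. -/
theorem small_jobs_to_zero_worsens_ratio (n : ℕ) (d : Fin n → ℝ)
    (hnn : ∀ i, 0 ≤ d i) (hmono : Monotone d)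
    (k : ℕ) (hk1 : 1 ≤ k) (hk : k ≤ n - 1)
    (hdk : d ⟨k - 1, by omega⟩ = 1)
    (hopt : 0 < smithCost d) :
    paretoCost d k * smithCost (fun i => if d i < 1 then 0 else d i) ≤
      paretoCost (fun i => if d i < 1 then 0 else d i) k * smithCost d := by
  have hkn : k < n := by omega
  set g : Fin n → ℝ := fun i => if d i < 1 then 0 else d i with hgdef
  have hg1 : ∀ j : Fin n, k ≤ (j : ℕ) → g j = d j := by
    intro j hj
    have hle : (⟨k - 1, by omega⟩ : Fin n) ≤ j := by
      rw [Fin.le_def]; simp; omega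
    have : (1 : ℝ) ≤ d j := hdk ▸ hmono hle
    simp [hgdef, not_lt.mpr this]
  have hgn : ∀ i, 0 ≤ g i := by
    intro i; simp only [hgdef]; split
    · exact le_refl 0
    · exact hnn i
  have hmg : Monotone g := by
    intro i j hij
    simp only [hgdef]
    by_cases hdj : d j < 1
    · rw [if_pos hdj, if_pos (lt_of_le_of_lt (hmono hij) hdj)]
    · rw [if_neg hdj]
      by_cases hdi : d i < 1
      · rw [if_pos hdi]; exact hnn j
      · rw [if_neg hdi]; exact hmono hij
  have hΔ : paretoCost d k - paretoCost g k = smithCost d - smithCost g := by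
    rw [paretoCost_eq hkn.le, paretoCost_eq hkn.le, smithCost, smithCost,
      ← Finset.sum_sub_distrib, ← Finset.sum_sub_distrib]
    refine Finset.sum_congr rfl fun j _ => ?_
    by_cases hj : (j : ℕ) < k
    · rw [if_pos hj]
    · rw [if_neg hj, hg1 j (le_of_not_gt hj)]
      ring
  have hΔ0 : 0 ≤ smithCost d - smithCost g := by
    rw [smithCost, smithCost, ← Finset.sum_sub_distrib]
    refine Finset.sum_nonneg fun j _ => ?_
    have h1 : g j ≤ d j := by
      simp only [hgdef]; split
      · exact hnn j
      · exact le_refl _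
    have h2 : ((j : ℕ) : ℝ) < (n : ℝ) := by exact_mod_cast j.isLt
    nlinarith
  have h2 : smithCost g ≤ paretoCost g k := smith_le_pareto hk1 hkn g hgn hmg
  have hSg : 0 ≤ smithCost g := smithCost_nonneg hgn
  nlinarith [mul_le_mul_of_nonneg_left h2 hΔ0]
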